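/- Let A be an arch system with atom factorisation A = a_1 a_2 ⋯ a_m and a_1 = arch over A_1. Then the generating function F_A of arch systems avoiding A satisfies F_A = 1 + t F_{A_1} F_A + t (F_{a_1} - F_{A_1}) F_{a_2⋯a_m} + t Σ_{k=2}^{m} (F_{a_1⋯a_k} - F_{a_1⋯a_{k-1}}) F_{a_k⋯a_m}. -/

import Mathlib

/-- Plane forests, modelling non-crossing arch systems: `node c r` is an atom
(an arch over the contents `c`) followed by the rest of the forest `r`. -/
inductive PF : Type
  | nil : PF
  | node : PF → PF → PF
  deriving DecidableEq

namespace PF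

/-- number of arches (nodes) -/
def size : PF → ℕ
  | nil => 0
  | node c r => 1 + c.size + r.size

/-- concatenation of arch systems -/
def append : PF → PF → PF
  | nil, q => q
  | node c r, q => node c (r.append q)

instance : Append PF := ⟨PF.append⟩

/-- an atom: a nonempty arch system with a single outermost arch -/
def IsAtom (a : PF) : Prop := ∃ c, a = node c nil

/-- an atom or the empty arch system -/
def AtomOrNil (a : PF) : Prop := a = nil ∨ IsAtom a

/-- One-step arch deletion: `Del X Y` means `Y` is obtained from `X` by deleting one arch
(the contents of a deleted arch are spliced in its place). -/
inductive Del : PF → PF → Prop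
  | root (c r : PF) : Del (node c r) (c ++ r)
  | inside {c c' : PF} (r : PF) : Del c c' → Del (node c r) (node c' r)
  | rest {r r' : PF} (c : PF) : Del r r' → Del (node c r) (node c r')

/-- `Contains X A` : `A` is a substructure (subsystem) of `X`. -/
def Contains (X A : PF) : Prop := Relation.ReflTransGen Del X A

/-- the class of arch systems avoiding `A` -/
def Av (A : PF) : Set PF := {X | ¬ Contains X A}

/-- Wilf-equivalence: same counting sequence by number of arches. -/
def WilfEq (A B : PF) : Prop :=
  ∀ n, Set.ncard {X | X ∈ Av A ∧ X.size = n} = Set.ncard {X | X ∈ Av B ∧ X.size = n}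

/-- the generating function of `Av A`, counting by number of arches -/
noncomputable def F (A : PF) : PowerSeries ℚ :=
  PowerSeries.mk fun n => (Set.ncard {X | X ∈ Av A ∧ X.size = n} : ℚ)

end PF

/-- concatenation of a list of arch systems -/
def concatList (L : List PF) : PF := L.foldr (· ++ ·) PF.nil

/-- The equivalence relation `∼` whose classes are cohorts: the finest equivalence
relation satisfying the four closure rules. -/
inductive Sim : PF → PF → Prop
  | refl (A : PF) : Sim A A
  | symm {A B : PF} : Sim A B → Sim B A
  | trans {A B C : PF} : Sim A B → Sim B C → Sim A C
  | arch {A B : PF} : Sim A B → Sim (PF.node A PF.nil) (PF.node B PF.nil)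
  | subst {a b : PF} (P Q : PF) : PF.AtomOrNil a → PF.AtomOrNil b → Sim a b →
      Sim (P ++ a ++ Q) (P ++ b ++ Q)
  | comm {a b : PF} (P Q : PF) : PF.AtomOrNil a → PF.AtomOrNil b →
      Sim (P ++ a ++ b ++ Q) (P ++ b ++ a ++ Q)
  | rot {a b c : PF} : PF.AtomOrNil a → PF.AtomOrNil b → PF.AtomOrNil c →
      Sim (a ++ PF.node (b ++ c) PF.nil) (PF.node (a ++ b) PF.nil ++ c)

/-- the nest of `n` nested arches -/
def nest : ℕ → PF
  | 0 => PF.nil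
  | n + 1 => PF.node (nest n) PF.nil

/-- the `n`-th Motzkin number -/
def motzkin (n : ℕ) : ℕ := ∑ k ∈ Finset.range (n + 1), n.choose (2 * k) * catalan k

/-- the truncated continued fractions `C_n` of the Catalan generating function -/
noncomputable def Cfun : ℕ → PowerSeries ℚ
  | 0 => 1
  | n + 1 => (1 - PowerSeries.X * Cfun n)⁻¹

/-- a balanced parenthesis word (Dyck word): `true` = opening, `false` = closing -/
def BalancedW (w : List Bool) : Prop :=
  w.count true = w.count false ∧ ∀ p : List Bool, p <+: w → p.count false ≤ p.count true

/-- the height of a Dyck path -/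
def wheight (w : List Bool) : ℕ :=
  (w.inits.map fun p => p.count true - p.count false).foldr max 0

/-- One-step deletion of a matched pair of parentheses (an arch) in a word. -/
inductive WDel : List Bool → List Bool → Prop
  | mk (x y z : List Bool) : BalancedW y →
      WDel (x ++ [true] ++ y ++ [false] ++ z) (x ++ y ++ z)

/-- `l` avoids the pattern 231 -/
def Avoids231 (l : List ℕ) : Prop := ¬ ∃ a b c : ℕ, [b, c, a].Sublist l ∧ a < b ∧ b < c

/-- `p` and `s` are order-isomorphic sequences -/
def OrdIso (p s : List ℕ) : Prop :=
  p.length = s.length ∧ ∀ i j : ℕ, i < p.length → j < p.length →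
    (p.getD i 0 < p.getD j 0 ↔ s.getD i 0 < s.getD j 0)

/-!
A nonempty arch system is `node C R`. It contains `A = node A₁ D`, where `D = a₂ ⋯ aₘ`, either
by keeping its outer arch (`C ⊇ A₁` and `R ⊇ D`) or after deleting it (`C ++ R ⊇ A`). As `A` is
a concatenation of atoms, `C ++ R ⊇ A` iff `C ⊇ a₁ ⋯ aₖ` and `R ⊇ aₖ₊₁ ⋯ aₘ` for some `k`.
Sorting `C` by the least `k` for which it avoids `a₁ ⋯ aₖ` splits the pairs with `C ++ R`
avoiding `A` into disjoint products, counted by `∑ₖ (F_{a₁⋯aₖ} - F_{a₁⋯aₖ₋₁}) F_{aₖ⋯aₘ}`.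
Among them, the pairs with `C ⊇ A₁` and `R ⊇ D` form `(Av a₁ \ Av A₁) × (Av A \ Av D)`;
removing these and separating the term `k = 1` gives the recursion.
-/

open PowerSeries Finset.HasAntidiagonal

section WeightGF

variable {α β ι : Type*} (R : Type*)

noncomputable def weightGF [Semiring R] (w : α → ℕ) (S : Set α) : PowerSeries R :=
  PowerSeries.mk fun n => ((S ∩ w ⁻¹' {n}).ncard : R)

variable {R} [Semiring R] {w : α → ℕ}

@[simp] lemma coeff_weightGF (S : Set α) (n : ℕ) :
    coeff n (weightGF R w S) = ((S ∩ w ⁻¹' {n}).ncard : R) :=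
  coeff_mk _ _

lemma weightGF_singleton (x : α) : weightGF R w {x} = X ^ w x := by
  ext n
  rw [coeff_weightGF, coeff_X_pow]
  by_cases h : n = w x
  · rw [Set.singleton_inter_of_mem (by exact h.symm), if_pos h, Set.ncard_singleton, Nat.cast_one]
  · rw [Set.singleton_inter_eq_empty.2 (by exact Ne.symm h), if_neg h, Set.ncard_empty,
      Nat.cast_zero]

lemma weightGF_union (hw : ∀ n, (w ⁻¹' {n}).Finite) {S T : Set α} (h : Disjoint S T) :
    weightGF R w (S ∪ T) = weightGF R w S + weightGF R w T := by
  ext n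
  rw [map_add, coeff_weightGF, coeff_weightGF, coeff_weightGF, Set.union_inter_distrib_right,
    Set.ncard_union_eq (h.mono Set.inter_subset_left Set.inter_subset_left)
      ((hw n).subset Set.inter_subset_right) ((hw n).subset Set.inter_subset_right),
    Nat.cast_add]

lemma weightGF_sdiff {R : Type*} [Ring R] (hw : ∀ n, (w ⁻¹' {n}).Finite) {S T : Set α}
    (h : T ⊆ S) : weightGF R w (S \ T) = weightGF R w S - weightGF R w T := by
  rw [eq_sub_iff_add_eq, ← weightGF_union hw Set.disjoint_sdiff_left, Set.sdiff_union_of_subset h]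

lemma weightGF_biUnion (hw : ∀ n, (w ⁻¹' {n}).Finite) (s : Finset ι) {f : ι → Set α}
    (h : (s : Set ι).PairwiseDisjoint f) :
    weightGF R w (⋃ i ∈ s, f i) = ∑ i ∈ s, weightGF R w (f i) := by
  ext n
  rw [map_sum, coeff_weightGF, Set.iUnion₂_inter, ← Finset.set_biUnion_coe,
    s.finite_toSet.ncard_biUnion (fun i _ => (hw n).subset Set.inter_subset_right)
      (h.mono fun i => Set.inter_subset_left), finsum_mem_coe_finset, Nat.cast_sum]
  simp only [coeff_weightGF]

lemma weightGF_image {w' : β → ℕ} {f : α → β} (hf : f.Injective) {d : ℕ}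
    (hw : ∀ x, w' (f x) = w x + d) (S : Set α) :
    weightGF R w' (f '' S) = X ^ d * weightGF R w S := by
  ext n
  rw [coeff_X_pow_mul', coeff_weightGF, ← Set.image_inter_preimage,
    Set.ncard_image_of_injective _ hf]
  split_ifs with hdn
  · have : f ⁻¹' (w' ⁻¹' {n}) = w ⁻¹' {n - d} := by
      ext x
      simp only [Set.mem_preimage, hw, Set.mem_singleton_iff]
      omega
    rw [this, coeff_weightGF]
  · have : f ⁻¹' (w' ⁻¹' {n}) = ∅ := by
      ext x
      simp only [Set.mem_preimage, hw, Set.mem_singleton_iff, Set.mem_empty_iff_false, iff_false]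
      omega
    rw [this, Set.inter_empty, Set.ncard_empty, Nat.cast_zero]

lemma finite_preimage_add {w₁ : α → ℕ} {w₂ : β → ℕ} (hw₁ : ∀ n, (w₁ ⁻¹' {n}).Finite)
    (hw₂ : ∀ n, (w₂ ⁻¹' {n}).Finite) (n : ℕ) :
    ((fun p : α × β => w₁ p.1 + w₂ p.2) ⁻¹' {n}).Finite := by
  refine (Set.Finite.biUnion (antidiagonal n).finite_toSet
    fun ij _ => (hw₁ ij.1).prod (hw₂ ij.2)).subset ?_
  rintro ⟨x, y⟩ hxy
  simp only [Set.mem_iUnion]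
  exact ⟨(w₁ x, w₂ y), by simpa using hxy, rfl, rfl⟩

lemma weightGF_prod {w₁ : α → ℕ} {w₂ : β → ℕ} (hw₁ : ∀ n, (w₁ ⁻¹' {n}).Finite)
    (hw₂ : ∀ n, (w₂ ⁻¹' {n}).Finite) (S : Set α) (T : Set β) :
    weightGF R (fun p => w₁ p.1 + w₂ p.2) (S ×ˢ T) = weightGF R w₁ S * weightGF R w₂ T := by
  ext n
  have hsplit : S ×ˢ T ∩ (fun p : α × β => w₁ p.1 + w₂ p.2) ⁻¹' {n} =
      ⋃ ij ∈ antidiagonal n, (S ∩ w₁ ⁻¹' {ij.1}) ×ˢ (T ∩ w₂ ⁻¹' {ij.2}) := by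
    ext ⟨x, y⟩
    simp [and_assoc]
  have hdisj : (antidiagonal n : Set (ℕ × ℕ)).PairwiseDisjoint
      fun ij => (S ∩ w₁ ⁻¹' {ij.1}) ×ˢ (T ∩ w₂ ⁻¹' {ij.2}) := by
    intro ij _ kl _ hne
    refine Set.disjoint_left.2 fun p hij hkl => hne ?_
    simp only [Set.mem_prod, Set.mem_inter_iff, Set.mem_preimage,
      Set.mem_singleton_iff] at hij hkl
    exact Prod.ext (hij.1.2.symm.trans hkl.1.2) (hij.2.2.symm.trans hkl.2.2)
  rw [coeff_mul, coeff_weightGF, hsplit, ← Finset.set_biUnion_coe,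
    (antidiagonal n).finite_toSet.ncard_biUnion
      (fun ij _ => ((hw₁ _).subset Set.inter_subset_right).prod
        ((hw₂ _).subset Set.inter_subset_right)) hdisj,
    finsum_mem_coe_finset, Nat.cast_sum]
  simp only [Set.ncard_prod, Nat.cast_mul, coeff_weightGF]

end WeightGF

section Chains

open Function

variable {α β : Type*}

lemma Monotone.pairwise_disjoint_on_sdiff_sub_one {S : ℕ → Set α} (hS : Monotone S) :
    Pairwise (Disjoint on fun k => S k \ S (k - 1)) :=
  (pairwise_disjoint_on _).2 fun _ _ hij =>
    Set.disjoint_sdiff_right.mono_left (Set.sdiff_subset.trans (hS (Nat.le_sub_one_of_lt hij)))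

lemma setOf_forall_mem_or_mem_eq_biUnion {S : ℕ → Set α} {T : ℕ → Set β} (hS : Monotone S)
    (hT : Antitone T) {m : ℕ} (hS₀ : S 0 = ∅) (hTm : T m = ∅) :
    {p : α × β | ∀ j ≤ m, p.1 ∈ S j ∨ p.2 ∈ T j} =
      ⋃ k ∈ Finset.Icc 1 m, (S k \ S (k - 1)) ×ˢ T (k - 1) := by
  classical
  ext ⟨x, y⟩
  simp only [Set.mem_ofPred_eq, Set.mem_iUnion, Set.mem_prod, Finset.mem_Icc, exists_prop]
  constructor
  · intro h
    have hxm : x ∈ S m := (h m le_rfl).resolve_right (by simp [hTm])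
    have hex : ∃ k, x ∈ S k := ⟨m, hxm⟩
    have hk₀ : Nat.find hex ≠ 0 := fun h₀ => by simpa [hS₀, h₀] using Nat.find_spec hex
    have hprev : x ∉ S (Nat.find hex - 1) := Nat.find_min hex (by omega)
    have hkm : Nat.find hex ≤ m := Nat.find_min' hex hxm
    exact ⟨Nat.find hex, ⟨by omega, hkm⟩, ⟨Nat.find_spec hex, hprev⟩,
      (h _ (by omega)).resolve_left hprev⟩
  · rintro ⟨k, -, ⟨hxk, -⟩, hy⟩ j -
    rcases le_or_gt k j with hkj | hjk
    · exact Or.inl (hS hkj hxk)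
    · exact Or.inr (hT (Nat.le_sub_one_of_lt hjk) hy)

end Chains

namespace PF

@[simp] lemma nil_append (q : PF) : nil ++ q = q := rfl

@[simp] lemma node_append (c r q : PF) : node c r ++ q = node c (r ++ q) := rfl

@[simp] lemma append_nil (p : PF) : p ++ nil = p := by
  induction p with
  | nil => rfl
  | node c r _ ih => rw [node_append, ih]

lemma append_assoc (p q r : PF) : p ++ q ++ r = p ++ (q ++ r) := by
  induction p with
  | nil => rfl
  | node c t _ ih => simp only [node_append, ih]

lemma Del.append_right {C C' : PF} (h : Del C C') (R : PF) : Del (C ++ R) (C' ++ R) := by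
  induction h with
  | root c r => simpa [append_assoc] using Del.root c (r ++ R)
  | inside r hd => exact Del.inside _ hd
  | rest c _ ih => exact Del.rest c ih

lemma Del.append_left {R R' : PF} (h : Del R R') (C : PF) : Del (C ++ R) (C ++ R') := by
  induction C with
  | nil => exact h
  | node c r _ ih => exact Del.rest c ih

lemma Contains.append_right {C C' : PF} (h : Contains C C') (R : PF) :
    Contains (C ++ R) (C' ++ R) :=
  Relation.ReflTransGen.lift (· ++ R) (fun _ _ hd => hd.append_right R) _ _ h

lemma Contains.append_left {R R' : PF} (h : Contains R R') (C : PF) :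
    Contains (C ++ R) (C ++ R') :=
  Relation.ReflTransGen.lift (C ++ ·) (fun _ _ hd => hd.append_left C) _ _ h

lemma Contains.append {C C' R R' : PF} (hC : Contains C C') (hR : Contains R R') :
    Contains (C ++ R) (C' ++ R') :=
  (hC.append_right R).trans (hR.append_left C')

lemma Contains.node {C C' R R' : PF} (hC : Contains C C') (hR : Contains R R') :
    Contains (node C R) (node C' R') :=
  (Relation.ReflTransGen.lift (PF.node · R) (fun _ _ => Del.inside R) _ _ hC).trans
    (Relation.ReflTransGen.lift (PF.node C') (fun _ _ => Del.rest C') _ _ hR)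

lemma contains_nil : ∀ X : PF, Contains X nil
  | nil => .refl
  | node c r => .head (Del.root c r) ((contains_nil c).append (contains_nil r))

lemma node_nil_contains (c : PF) : Contains (node c nil) c := by
  have h : Contains (node c nil) (c ++ nil) := .single (Del.root c nil)
  rwa [append_nil] at h

lemma append_contains_left (P Q : PF) : Contains (P ++ Q) P := by
  simpa using Contains.append (C := P) .refl (contains_nil Q)

lemma append_contains_right (P Q : PF) : Contains (P ++ Q) Q :=
  (contains_nil P).append_right Q

lemma exists_of_del_append {C R Z : PF} (h : Del (C ++ R) Z) :
    (∃ C', Del C C' ∧ Z = C' ++ R) ∨ (∃ R', Del R R' ∧ Z = C ++ R') := by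
  induction C generalizing Z with
  | nil => exact Or.inr ⟨Z, h, rfl⟩
  | node c r _ ih =>
    cases h with
    | root => exact Or.inl ⟨c ++ r, Del.root c r, (append_assoc c r R).symm⟩
    | inside _ hd => exact Or.inl ⟨node _ r, Del.inside r hd, rfl⟩
    | rest _ hd =>
      rcases ih hd with ⟨r', hr, rfl⟩ | ⟨R', hR, rfl⟩
      · exact Or.inl ⟨node c r', Del.rest c hr, rfl⟩
      · exact Or.inr ⟨R', hR, rfl⟩

lemma exists_of_contains_append {C R Z : PF} (h : Contains (C ++ R) Z) :
    ∃ Z₁ Z₂, Z = Z₁ ++ Z₂ ∧ Contains C Z₁ ∧ Contains R Z₂ := by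
  generalize hW : C ++ R = W at h
  induction h using Relation.ReflTransGen.head_induction_on generalizing C R with
  | refl => exact ⟨C, R, hW.symm, .refl, .refl⟩
  | head hd _ ih =>
    subst hW
    rcases exists_of_del_append hd with ⟨C', hC, rfl⟩ | ⟨R', hR, rfl⟩
    · obtain ⟨Z₁, Z₂, rfl, h₁, h₂⟩ := ih rfl
      exact ⟨Z₁, Z₂, rfl, .head hC h₁, h₂⟩
    · obtain ⟨Z₁, Z₂, rfl, h₁, h₂⟩ := ih rfl
      exact ⟨Z₁, Z₂, rfl, h₁, .head hR h₂⟩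

lemma node_contains_node_iff {C R P T : PF} :
    Contains (node C R) (node P T) ↔
      (Contains C P ∧ Contains R T) ∨ Contains (C ++ R) (node P T) := by
  refine ⟨fun h => ?_, ?_⟩
  · generalize hW : node C R = W at h
    induction h using Relation.ReflTransGen.head_induction_on generalizing C R with
    | refl => cases hW; exact Or.inl ⟨.refl, .refl⟩
    | head hd htl ih =>
      subst hW
      cases hd with
      | root => exact Or.inr htl
      | inside _ hC =>
        rcases ih rfl with ⟨h₁, h₂⟩ | h₁
        · exact Or.inl ⟨.head hC h₁, h₂⟩
        · exact Or.inr (.head (hC.append_right R) h₁)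
      | rest _ hR =>
        rcases ih rfl with ⟨h₁, h₂⟩ | h₁
        · exact Or.inl ⟨h₁, .head hR h₂⟩
        · exact Or.inr (.head (hR.append_left C) h₁)
  · rintro (⟨h₁, h₂⟩ | h)
    · exact h₁.node h₂
    · exact .head (Del.root C R) h

lemma nil_mem_Av_node (P T : PF) : nil ∈ Av (node P T) := by
  intro h
  rcases h.cases_head with h | ⟨_, hd, _⟩
  · cases h
  · cases hd

lemma Av_nil : Av nil = ∅ :=
  Set.eq_empty_of_forall_notMem fun X hX => hX (contains_nil X)

lemma Av_subset_Av {A B : PF} (h : Contains A B) : Av B ⊆ Av A :=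
  fun _ hX hXA => hX (hXA.trans h)

lemma finite_setOf_size_le (n : ℕ) : {X : PF | X.size ≤ n}.Finite := by
  induction n with
  | zero =>
    refine (Set.finite_singleton nil).subset ?_
    rintro (_ | ⟨c, r⟩) hX
    · rfl
    · simp [size] at hX
  | succ n ih =>
    refine (((ih.prod ih).image (Function.uncurry node)).insert nil).subset ?_
    rintro (_ | ⟨c, r⟩) hX
    · exact Set.mem_insert _ _
    · simp only [Set.mem_ofPred_eq, size] at hX
      exact Or.inr ⟨(c, r), ⟨(by omega : c.size ≤ n), (by omega : r.size ≤ n)⟩, rfl⟩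

lemma finite_size_preimage (n : ℕ) : (size ⁻¹' {n}).Finite :=
  (finite_setOf_size_le n).subset fun _ hX => le_of_eq hX

lemma F_eq_weightGF (A : PF) : F A = weightGF ℚ size (Av A) := rfl

lemma F_nil : F nil = 0 := by
  ext n
  simp [F_eq_weightGF, Av_nil]

end PF

open PF

@[simp] lemma concatList_nil : concatList [] = nil := rfl

@[simp] lemma concatList_cons (a : PF) (M : List PF) :
    concatList (a :: M) = a ++ concatList M := rfl

lemma concatList_append (M N : List PF) :
    concatList (M ++ N) = concatList M ++ concatList N := by
  induction M with
  | nil => rfl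
  | cons a M ih => simp [ih, PF.append_assoc]

lemma concatList_contains_take (M : List PF) (k : ℕ) :
    Contains (concatList M) (concatList (M.take k)) := by
  conv_lhs => rw [← List.take_append_drop k M, concatList_append]
  exact append_contains_left _ _

lemma concatList_contains_drop (M : List PF) (k : ℕ) :
    Contains (concatList M) (concatList (M.drop k)) := by
  conv_lhs => rw [← List.take_append_drop k M, concatList_append]
  exact append_contains_right _ _

lemma exists_take_drop_of_concatList_eq_append {M : List PF} (hM : ∀ a ∈ M, a.IsAtom)
    {Z₁ Z₂ : PF} (h : concatList M = Z₁ ++ Z₂) :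
    ∃ k ≤ M.length, Z₁ = concatList (M.take k) ∧ Z₂ = concatList (M.drop k) := by
  induction M generalizing Z₁ with
  | nil =>
    cases Z₁ with
    | nil => exact ⟨0, le_rfl, rfl, h.symm⟩
    | node => cases h
  | cons a M ih =>
    obtain ⟨c, rfl⟩ := hM a List.mem_cons_self
    cases Z₁ with
    | nil => exact ⟨0, Nat.zero_le _, rfl, h.symm⟩
    | node c₁ r₁ =>
      injection h with hc hr
      obtain ⟨k, hk, rfl, rfl⟩ := ih (fun a ha => hM a (List.mem_cons_of_mem _ ha)) hr
      exact ⟨k + 1, Nat.succ_le_succ hk, by simp [hc], rfl⟩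

lemma append_contains_concatList_iff {M : List PF} (hM : ∀ a ∈ M, a.IsAtom) (C R : PF) :
    Contains (C ++ R) (concatList M) ↔
      ∃ k ≤ M.length, Contains C (concatList (M.take k)) ∧ Contains R (concatList (M.drop k)) := by
  constructor
  · intro h
    obtain ⟨Z₁, Z₂, hZ, h₁, h₂⟩ := exists_of_contains_append h
    obtain ⟨k, hk, rfl, rfl⟩ := exists_take_drop_of_concatList_eq_append hM hZ
    exact ⟨k, hk, h₁, h₂⟩
  · rintro ⟨k, -, h₁, h₂⟩
    rw [← List.take_append_drop k M, concatList_append]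
    exact h₁.append h₂

namespace PF

lemma Av_node_eq (P T : PF) :
    Av (node P T) = insert nil (Function.uncurry node ''
      (Function.uncurry (· ++ ·) ⁻¹' Av (node P T) \ {p | Contains p.1 P ∧ Contains p.2 T})) := by
  ext (_ | ⟨C, R⟩)
  · simp [nil_mem_Av_node]
  · simp [Av, node_contains_node_iff, not_or, and_comm]

lemma F_node_eq (P T : PF) :
    F (node P T) = 1 + X * weightGF ℚ (fun p : PF × PF => p.1.size + p.2.size)
      (Function.uncurry (· ++ ·) ⁻¹' Av (node P T) \ {p | Contains p.1 P ∧ Contains p.2 T}) := by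
  have hinj : (Function.uncurry node).Injective := fun ⟨_, _⟩ ⟨_, _⟩ h => by
    cases h; rfl
  rw [F_eq_weightGF]
  conv_lhs => rw [Av_node_eq]
  rw [Set.insert_eq, weightGF_union finite_size_preimage
      (Set.disjoint_singleton_left.2 (by rintro ⟨_, _, h⟩; cases h)),
    weightGF_singleton,
    weightGF_image (w := fun p : PF × PF => p.1.size + p.2.size) hinj (d := 1)
      fun _ => by simp only [Function.uncurry, size]; omega]
  simp [size]

lemma weightGF_append_preimage_Av_concatList {M : List PF} (hM : ∀ a ∈ M, a.IsAtom) :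
    weightGF ℚ (fun p : PF × PF => p.1.size + p.2.size)
        (Function.uncurry (· ++ ·) ⁻¹' Av (concatList M)) =
      ∑ k ∈ Finset.Icc 1 M.length, (F (concatList (M.take k)) - F (concatList (M.take (k - 1)))) *
        F (concatList (M.drop (k - 1))) := by
  have hS : Monotone fun k => Av (concatList (M.take k)) := fun j k hjk =>
    Av_subset_Av (by simpa [List.take_take, min_eq_left hjk] using
      concatList_contains_take (M.take k) j)
  have hT : Antitone fun k => Av (concatList (M.drop k)) := fun j k hjk =>
    Av_subset_Av (by simpa [hjk] using concatList_contains_drop (M.drop j) (k - j))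
  have hcells : Function.uncurry (· ++ ·) ⁻¹' Av (concatList M) =
      ⋃ k ∈ Finset.Icc 1 M.length, (Av (concatList (M.take k)) \
        Av (concatList (M.take (k - 1)))) ×ˢ Av (concatList (M.drop (k - 1))) := by
    refine .trans ?_ (setOf_forall_mem_or_mem_eq_biUnion hS hT (by simp [Av_nil]) (by simp [Av_nil]))
    ext ⟨C, R⟩
    simp [Av, append_contains_concatList_iff hM, imp_iff_not_or]
  rw [hcells, weightGF_biUnion (finite_preimage_add finite_size_preimage finite_size_preimage)
    _ fun i _ j _ hij => Set.disjoint_prod.2 (.inl (hS.pairwise_disjoint_on_sdiff_sub_one hij))]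
  refine Finset.sum_congr rfl fun k _ => ?_
  rw [weightGF_prod finite_size_preimage finite_size_preimage,
    weightGF_sdiff finite_size_preimage (hS (Nat.sub_le k 1))]
  rfl

lemma append_preimage_Av_cons_inter_eq (A₁ : PF) {a : PF} {M : List PF}
    (hM : ∀ x ∈ a :: M, x.IsAtom) :
    Function.uncurry (· ++ ·) ⁻¹' Av (concatList (a :: M)) ∩
        {p | Contains p.1 A₁ ∧ Contains p.2 (concatList M)} =
      (Av a \ Av A₁) ×ˢ (Av (concatList (a :: M)) \ Av (concatList M)) := by
  ext ⟨C, R⟩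
  simp only [Set.mem_inter_iff, Set.mem_preimage, Function.uncurry_apply_pair, Set.mem_prod,
    Set.mem_sdiff, Set.mem_ofPred_eq, Av, not_not]
  rw [append_contains_concatList_iff hM]
  constructor
  · rintro ⟨h, hC, hR⟩
    refine ⟨⟨fun hCa => h ⟨1, by simp, by simpa using hCa, by simpa using hR⟩, hC⟩,
      fun hRA => h ⟨0, by simp, by simpa using contains_nil C, by simpa using hRA⟩, hR⟩
  · rintro ⟨⟨hCa, hC⟩, hRA, hR⟩
    refine ⟨?_, hC, hR⟩
    rintro ⟨_ | k, -, hCk, hRk⟩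
    · exact hRA (by simpa using hRk)
    · have ha : Contains (concatList ((a :: M).take (k + 1))) a := by
        simpa using concatList_contains_take ((a :: M).take (k + 1)) 1
      exact hCa (hCk.trans ha)

end PF

/-- The recursive equation for the generating function of `Av(A)` in terms of the
atom factorisation `A = a₁ a₂ ⋯ a_m` with `a₁` an arch over `A₁`. -/
theorem F_recursion (L : List PF) (A₁ : PF) (hL : L ≠ [])
    (hatoms : ∀ a ∈ L, a.IsAtom) (hhead : L.head hL = PF.node A₁ PF.nil) :
    PF.F (concatList L) =
      1 + PowerSeries.X * PF.F A₁ * PF.F (concatList L)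
        + PowerSeries.X * (PF.F (L.head hL) - PF.F A₁) * PF.F (concatList (L.drop 1))
        + PowerSeries.X * ∑ k ∈ Finset.Icc 2 L.length,
            (PF.F (concatList (L.take k)) - PF.F (concatList (L.take (k - 1)))) *
              PF.F (concatList (L.drop (k - 1))) := by
  obtain ⟨L', rfl⟩ : ∃ L', L = PF.node A₁ PF.nil :: L' :=
    ⟨L.tail, hhead ▸ (List.cons_head_tail hL).symm⟩
  have hfin := finite_preimage_add finite_size_preimage finite_size_preimage
  have hD₁ : Contains (concatList (PF.node A₁ PF.nil :: L')) (concatList L') :=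
    append_contains_right _ _
  have hF := F_node_eq A₁ (concatList L')
  rw [← Set.sdiff_self_inter, weightGF_sdiff hfin Set.inter_subset_left,
    show PF.node A₁ (concatList L') = concatList (PF.node A₁ PF.nil :: L') from rfl,
    append_preimage_Av_cons_inter_eq A₁ hatoms, weightGF_append_preimage_Av_concatList hatoms,
    weightGF_prod finite_size_preimage finite_size_preimage,
    weightGF_sdiff finite_size_preimage (Av_subset_Av (node_nil_contains A₁)),
    weightGF_sdiff finite_size_preimage (Av_subset_Av hD₁),
    ← Finset.insert_Icc_add_one_left_eq_Icc (by simp), Finset.sum_insert (by simp)] at hF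
  simp only [← F_eq_weightGF, Nat.reduceAdd, Nat.sub_self, List.take_zero, List.drop_zero,
    List.take_succ_cons, concatList_nil, F_nil, concatList_cons, append_nil] at hF
  simp only [List.head_cons, List.drop_one, List.tail_cons, concatList_cons]
  linear_combination hF
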